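/- arXiv:1707.06466 — 2 statements merged into one kernel-verified Lean document; each statement's English description precedes it below -/
import Mathlib

section
/- Let L be an m×n sign pattern matrix (entries in {-1,0,1}) with n ≥ m, and suppose that for every nonzero diagonal sign pattern matrix D of size m×m there exists a column of D·L that is nonzero and all of whose nonzero entries have the same sign. Then every real m×n matrix M with sgn(M) = sgn(L) entrywise has full row rank m. -/
private lemma real_sign_mul' (x y : ℝ) : Real.sign (x * y) = Real.sign x * Real.sign y := by
  rcases lt_trichotomy x 0 with hx|hx|hx <;> rcases lt_trichotomy y 0 with hy|hy|hy
  · rw [Real.sign_of_pos (mul_pos_of_neg_of_neg hx hy), Real.sign_of_neg hx,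
      Real.sign_of_neg hy]; ring
  · simp [hy, Real.sign_zero]
  · rw [Real.sign_of_neg (mul_neg_of_neg_of_pos hx hy), Real.sign_of_neg hx,
      Real.sign_of_pos hy]; ring
  · simp [hx, Real.sign_zero]
  · simp [hx, Real.sign_zero]
  · simp [hx, Real.sign_zero]
  · rw [Real.sign_of_neg (mul_neg_of_pos_of_neg hx hy), Real.sign_of_pos hx,
      Real.sign_of_neg hy]; ring
  · simp [hy, Real.sign_zero]
  · rw [Real.sign_of_pos (mul_pos hx hy), Real.sign_of_pos hx, Real.sign_of_pos hy]; ring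

private lemma real_sign_fix {x : ℝ} (h : x = -1 ∨ x = 0 ∨ x = 1) : Real.sign x = x := by
  rcases h with h|h|h <;> subst h
  · exact Real.sign_of_neg (by norm_num)
  · exact Real.sign_zero
  · exact Real.sign_one

/-- If for every nonzero diagonal sign pattern matrix `D` there is a
column of `D * L` that is nonzero and all of whose nonzero entries share the same sign,
then every real matrix `M` with the same sign pattern as `L` has full row rank. -/
theorem stmt_0 (m n : ℕ) (hmn : m ≤ n) (L : Matrix (Fin m) (Fin n) ℝ)
    (hL : ∀ i j, L i j = -1 ∨ L i j = 0 ∨ L i j = 1)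
    (hcol : ∀ D : Fin m → ℝ, (∀ i, D i = -1 ∨ D i = 0 ∨ D i = 1) → D ≠ 0 →
      ∃ j : Fin n, (∃ i, D i * L i j ≠ 0) ∧
        ∀ i i', D i * L i j ≠ 0 → D i' * L i' j ≠ 0 →
          Real.sign (D i * L i j) = Real.sign (D i' * L i' j)) :
    ∀ M : Matrix (Fin m) (Fin n) ℝ,
      (∀ i j, Real.sign (M i j) = Real.sign (L i j)) → M.rank = m := by
  intro M hM
  have key : ∀ c : Fin m → ℝ, Matrix.mulVec (Matrix.transpose M) c = 0 → c = 0 := by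
    intro c hc
    by_contra hc0
    set D : Fin m → ℝ := fun i => Real.sign (c i) with hD
    have hDvals : ∀ i, D i = -1 ∨ D i = 0 ∨ D i = 1 := fun i => Real.sign_apply_eq (c i)
    have hDne : D ≠ 0 := by
      intro h
      apply hc0
      funext i
      have := congrFun h i
      simpa [hD, Real.sign_eq_zero_iff] using this
    obtain ⟨j, ⟨i₀, hi₀⟩, hsame⟩ := hcol D hDvals hDne
    -- entries of D·L are in {-1,0,1}
    have hDL : ∀ i, D i * L i j = -1 ∨ D i * L i j = 0 ∨ D i * L i j = 1 := by
      intro i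
      rcases hDvals i with h|h|h <;> rcases hL i j with h2|h2|h2 <;>
        rw [h, h2] <;> norm_num
    -- sign of c i * M i j equals D i * L i j
    have hsign : ∀ i, Real.sign (c i * M i j) = D i * L i j := by
      intro i
      rw [real_sign_mul', hM i j, real_sign_fix (hL i j)]
    -- all nonzero D i * L i j equal D i₀ * L i₀ j =: s
    set s := D i₀ * L i₀ j with hs
    have hsval : s = -1 ∨ s = 1 := by
      rcases hDL i₀ with h|h|h
      · exact Or.inl h
      · exact absurd h hi₀
      · exact Or.inr h
    have heq : ∀ i, D i * L i j = 0 ∨ D i * L i j = s := by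
      intro i
      by_cases h : D i * L i j = 0
      · exact Or.inl h
      · right
        have := hsame i i₀ h hi₀
        rwa [real_sign_fix (hDL i), real_sign_fix (hDL i₀)] at this
    -- the column sum is zero
    have hsum : ∑ i, c i * M i j = 0 := by
      have := congrFun hc j
      simpa [Matrix.mulVec, dotProduct, Matrix.transpose_apply, mul_comm] using this
    -- each term s * (c i * M i j) is nonneg, positive at i₀
    have hterm : ∀ i, 0 ≤ s * (c i * M i j) := by
      intro i
      rcases heq i with h|h
      · have : c i * M i j = 0 := by
          rw [← Real.sign_eq_zero_iff, hsign i, h]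
        simp [this]
      · have hsgn : Real.sign (c i * M i j) = s := by rw [hsign i, h]
        rcases hsval with hv|hv
        · have : c i * M i j ≤ 0 := by
            by_contra hpos
            push_neg at hpos
            rw [Real.sign_of_pos hpos, hv] at hsgn; norm_num at hsgn
          rw [hv]; nlinarith
        · have : 0 ≤ c i * M i j := by
            by_contra hneg
            push_neg at hneg
            rw [Real.sign_of_neg hneg, hv] at hsgn; norm_num at hsgn
          rw [hv]; nlinarith
    have hterm0 : 0 < s * (c i₀ * M i₀ j) := by
      have hsgn : Real.sign (c i₀ * M i₀ j) = s := by rw [hsign i₀]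
      have hne : c i₀ * M i₀ j ≠ 0 := by
        intro h
        rw [h, Real.sign_zero] at hsgn
        rcases hsval with hv|hv <;> rw [hv] at hsgn <;> norm_num at hsgn
      rcases hsval with hv|hv
      · have : c i₀ * M i₀ j < 0 := by
          rcases lt_trichotomy (c i₀ * M i₀ j) 0 with h|h|h
          · exact h
          · exact absurd h hne
          · rw [Real.sign_of_pos h, hv] at hsgn; norm_num at hsgn
        rw [hv]; nlinarith
      · have : 0 < c i₀ * M i₀ j := by
          rcases lt_trichotomy (c i₀ * M i₀ j) 0 with h|h|h
          · rw [Real.sign_of_neg h, hv] at hsgn; norm_num at hsgn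
          · exact absurd h hne
          · exact h
        rw [hv]; nlinarith
    have : (0:ℝ) < ∑ i, s * (c i * M i j) :=
      Finset.sum_pos' (fun i _ => hterm i) ⟨i₀, Finset.mem_univ _, hterm0⟩
    rw [← Finset.mul_sum, hsum, mul_zero] at this
    exact lt_irrefl 0 this
  have hinj : Function.Injective (Matrix.mulVecLin (Matrix.transpose M)) := by
    rw [← LinearMap.ker_eq_bot, LinearMap.ker_eq_bot']
    intro c hc
    exact key c (by rw [← Matrix.mulVecLin_apply]; exact hc)
  have hrank : Matrix.rank (Matrix.transpose M) = m := by
    rw [Matrix.rank, LinearMap.finrank_range_of_inj hinj]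
    simp
  rw [← Matrix.rank_transpose]
  exact hrank
end

section
/- Let L be an m×n sign pattern matrix with n ≥ m such that every matrix M with sgn(M) = sgn(L) has full row rank m (i.e., L is an L-matrix). Then for every nonzero m×m diagonal sign pattern matrix D there exists a column of D·L that is nonzero and all of whose nonzero entries have the same sign. -/
private lemma sign_pos_mul_aux (c x : ℝ) (hc : 0 < c) :
    Real.sign (c * x) = Real.sign x := by
  rcases lt_trichotomy x 0 with h|h|h
  · rw [Real.sign_of_neg h, Real.sign_of_neg (mul_neg_of_pos_of_neg hc h)]
  · simp [h]
  · rw [Real.sign_of_pos h, Real.sign_of_pos (mul_pos hc h)]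

/-- If `L` is an L-matrix (every matrix with the same sign pattern has full
row rank), then for every nonzero diagonal sign pattern matrix `D` some column of `D * L`
is nonzero and all its nonzero entries share the same sign. -/
theorem stmt_1 (m n : ℕ) (hmn : m ≤ n) (L : Matrix (Fin m) (Fin n) ℝ)
    (hL : ∀ i j, L i j = -1 ∨ L i j = 0 ∨ L i j = 1)
    (hLmat : ∀ M : Matrix (Fin m) (Fin n) ℝ,
      (∀ i j, Real.sign (M i j) = Real.sign (L i j)) → M.rank = m) :
    ∀ D : Fin m → ℝ, (∀ i, D i = -1 ∨ D i = 0 ∨ D i = 1) → D ≠ 0 →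
      ∃ j : Fin n, (∃ i, D i * L i j ≠ 0) ∧
        ∀ i i', D i * L i j ≠ 0 → D i' * L i' j ≠ 0 →
          Real.sign (D i * L i j) = Real.sign (D i' * L i' j) := by
  intro D hD hD0
  by_contra hcon
  push_neg at hcon
  classical
  set s : Fin m → Fin n → ℝ := fun i j => D i * L i j with hs_def
  have hs3 : ∀ i j, s i j = -1 ∨ s i j = 0 ∨ s i j = 1 := by
    intro i j
    rcases hD i with h|h|h <;> rcases hL i j with h'|h'|h' <;>
      simp [s, h, h']
  set a : Fin n → ℕ := fun j => (Finset.univ.filter (fun i => s i j = 1)).card with ha_def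
  set b : Fin n → ℕ := fun j => (Finset.univ.filter (fun i => s i j = -1)).card with hb_def
  have hsgn : ∀ (x : ℝ), x = 1 ∨ x = -1 → Real.sign x = x := by
    rintro x (rfl|rfl)
    · exact Real.sign_one
    · rw [Real.sign_of_neg (by norm_num)]
  have hkey : ∀ j, (∃ i, s i j ≠ 0) → 0 < a j ∧ 0 < b j := by
    intro j hj
    obtain ⟨i, i', hi, hi', hne⟩ := hcon j hj
    have e : ∀ k, s k j ≠ 0 → s k j = 1 ∨ s k j = -1 := by
      intro k hk
      rcases hs3 k j with h|h|h
      · exact Or.inr h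
      · exact absurd h hk
      · exact Or.inl h
    have hpos1 : s i j = 1 ∨ s i' j = 1 → s i j = -1 ∨ s i' j = -1 →
        0 < a j ∧ 0 < b j := by
      rintro (h1|h1) (h2|h2)
      · rw [h1] at h2; norm_num at h2
      · exact ⟨Finset.card_pos.mpr ⟨i, by simp [h1]⟩,
          Finset.card_pos.mpr ⟨i', by simp [h2]⟩⟩
      · exact ⟨Finset.card_pos.mpr ⟨i', by simp [h1]⟩,
          Finset.card_pos.mpr ⟨i, by simp [h2]⟩⟩
      · rw [h1] at h2; norm_num at h2
    rcases e i hi with h1|h1 <;> rcases e i' hi' with h2|h2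
    · exact absurd (by rw [hsgn _ (Or.inl h1), hsgn _ (Or.inl h2), h1, h2]) hne
    · exact hpos1 (Or.inl h1) (Or.inr h2)
    · exact hpos1 (Or.inr h2) (Or.inl h1)
    · exact absurd (by rw [hsgn _ (Or.inr h1), hsgn _ (Or.inr h2), h1, h2]) hne
  set M : Matrix (Fin m) (Fin n) ℝ := fun i j =>
    (if s i j = 1 then (b j : ℝ) else if s i j = -1 then (a j : ℝ) else 1) * L i j
    with hM_def
  have hmultpos : ∀ i j,
      (0:ℝ) < (if s i j = 1 then (b j : ℝ) else if s i j = -1 then (a j : ℝ) else 1) := by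
    intro i j
    split_ifs with h1 h2
    · exact_mod_cast (hkey j ⟨i, by rw [h1]; norm_num⟩).2
    · exact_mod_cast (hkey j ⟨i, by rw [h2]; norm_num⟩).1
    · norm_num
  have hMsign : ∀ i j, Real.sign (M i j) = Real.sign (L i j) := by
    intro i j
    exact sign_pos_mul_aux _ _ (hmultpos i j)
  have hrank := hLmat M hMsign
  -- D is in the left kernel of M
  have hsum : ∀ j, ∑ i, M i j * D i = 0 := by
    intro j
    have hpt : ∀ i, M i j * D i =
        (if s i j = 1 then ((b j : ℝ)) else 0) + (if s i j = -1 then -((a j : ℝ)) else 0) := by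
      intro i
      have : M i j * D i =
          (if s i j = 1 then (b j : ℝ) else if s i j = -1 then (a j : ℝ) else 1) * s i j := by
        show (_ * L i j) * D i = _
        rw [hs_def]; ring
      rw [this]
      rcases hs3 i j with h|h|h <;> rw [h] <;> norm_num
    rw [Finset.sum_congr rfl (fun i _ => hpt i), Finset.sum_add_distrib,
      ← Finset.sum_filter, ← Finset.sum_filter, Finset.sum_const, Finset.sum_const]
    show (a j) • ((b j : ℝ)) + (b j) • (-((a j : ℝ))) = 0
    simp [nsmul_eq_mul]
    ring
  have hker : D ∈ LinearMap.ker M.transpose.mulVecLin := by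
    rw [LinearMap.mem_ker]
    ext j
    simpa [Matrix.mulVecLin_apply, Matrix.mulVec, Matrix.vecMul, dotProduct,
      Matrix.transpose_apply, mul_comm] using hsum j
  have hkpos : 0 < Module.finrank ℝ (LinearMap.ker (M.transpose.mulVecLin)) :=
    Module.finrank_pos_iff_exists_ne_zero.mpr ⟨⟨D, hker⟩, by
      simp only [ne_eq, Submodule.mk_eq_zero]; exact hD0⟩
  have hrn := LinearMap.finrank_range_add_finrank_ker (M.transpose.mulVecLin)
  rw [Module.finrank_fin_fun] at hrn
  have hlt : M.transpose.rank < m := by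
    have : M.transpose.rank = Module.finrank ℝ (LinearMap.range M.transpose.mulVecLin) := rfl
    omega
  rw [Matrix.rank_transpose, hrank] at hlt
  omega
end
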